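/- (Auxiliary function solves the linearized equation.) Let u be a C³ convex function on an open set in ℝⁿ with positive definite Hessian satisfying det D²u = c for a constant c > 0. Let (U^{ij}) denote the cofactor matrix of D²u, and for any constant K define w = ∂₁u + K(u − (n/2) x₁ ∂₁u). Then Σ_{i,j} U^{ij} ∂_i∂_j w = 0 on that open set. -/

import Mathlib

open MeasureTheory Set Filter
open scoped ENNReal Topology

noncomputable section

/-- The partial derivative `∂ᵢ g` of a function `g : ℝⁿ → ℝ`. -/
def pd {n : ℕ} (i : Fin n) (g : EuclideanSpace ℝ (Fin n) → ℝ)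
    (x : EuclideanSpace ℝ (Fin n)) : ℝ :=
  fderiv ℝ g x (EuclideanSpace.single i 1)

/-- The Hessian matrix `(∂ᵢ∂ⱼ u)(x)`. -/
def hessMatrix {n : ℕ} (u : EuclideanSpace ℝ (Fin n) → ℝ)
    (x : EuclideanSpace ℝ (Fin n)) : Matrix (Fin n) (Fin n) ℝ :=
  Matrix.of fun i j => pd i (pd j u) x

/-!
Write `L f = ∑ U^{ij} ∂ᵢ∂ⱼ f`; since `det D²u ≠ 0`, `U` is the adjugate of `D²u`. Jacobi's
formula differentiates `det D²u = c` in the direction `e₁` and, after commuting third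
derivatives, gives `L (∂₁u) = 0`. Moreover `L u = tr (U D²u) = n c`, and the product rule gives
`L (x₁ ∂₁u) = (U D²u)₁₁ + (D²u U)₁₁ + x₁ L (∂₁u) = 2c`. Hence `L w = K (n c - (n/2) 2c) = 0`.
-/

open scoped Matrix

section PartialDerivatives

variable {m : ℕ} {f g : EuclideanSpace ℝ (Fin m) → ℝ} {x : EuclideanSpace ℝ (Fin m)}
  {i j k : Fin m}

theorem pd_congr (h : f =ᶠ[𝓝 x] g) : pd i f x = pd i g x := by
  rw [pd, h.fderiv_eq, pd]

theorem HasFDerivAt.pd_eq {f' : EuclideanSpace ℝ (Fin m) →L[ℝ] ℝ} (h : HasFDerivAt f f' x) :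
    pd i f x = f' (EuclideanSpace.single i 1) := by
  rw [pd, h.fderiv]

theorem contDiffAt_pd {n l : WithTop ℕ∞} (hf : ContDiffAt ℝ n f x) (h : l + 1 ≤ n) (j : Fin m) :
    ContDiffAt ℝ l (pd j f) x :=
  (hf.fderiv_right h).clm_apply contDiffAt_const

theorem ContDiffAt.eventually_differentiableAt (hf : ContDiffAt ℝ 2 f x) :
    ∀ᶠ y in 𝓝 x, DifferentiableAt ℝ f y :=
  (hf.eventually (by simp)).mono fun _ hy => hy.differentiableAt (by norm_num)

theorem ContDiffAt.differentiableAt_pd (hf : ContDiffAt ℝ 2 f x) (j : Fin m) :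
    DifferentiableAt ℝ (pd j f) x :=
  (contDiffAt_pd hf (l := 1) le_rfl j).differentiableAt one_ne_zero

theorem pd_add (hf : DifferentiableAt ℝ f x) (hg : DifferentiableAt ℝ g x) :
    pd i (fun y => f y + g y) x = pd i f x + pd i g x := by
  simp only [pd, fderiv_fun_add hf hg, add_apply]

theorem pd_sub (hf : DifferentiableAt ℝ f x) (hg : DifferentiableAt ℝ g x) :
    pd i (fun y => f y - g y) x = pd i f x - pd i g x := by
  simp only [pd, fderiv_fun_sub hf hg, sub_apply]

theorem pd_const_mul (hf : DifferentiableAt ℝ f x) (a : ℝ) :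
    pd i (fun y => a * f y) x = a * pd i f x := by
  simp only [pd, fderiv_const_mul hf, smul_apply, smul_eq_mul]

theorem pd_coord_mul (hf : DifferentiableAt ℝ f x) (k : Fin m) :
    pd i (fun y => y k * f y) x = (if i = k then 1 else 0) * f x + x k * pd i f x := by
  rw [((PiLp.hasFDerivAt_apply (𝕜 := ℝ) 2 x k).fun_mul hf.hasFDerivAt).pd_eq]
  simp only [add_apply, smul_apply, smul_eq_mul, PiLp.proj_apply, PiLp.single_apply, eq_comm,
    mul_ite, mul_one, mul_zero, ite_mul, one_mul, zero_mul, pd]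
  ring

theorem pd_pd_eq_fderiv_fderiv (hf : ContDiffAt ℝ 2 f x) :
    pd i (pd j f) x
      = fderiv ℝ (fderiv ℝ f) x (EuclideanSpace.single i 1) (EuclideanSpace.single j 1) := by
  have hd : DifferentiableAt ℝ (fderiv ℝ f) x :=
    (hf.fderiv_right (le_refl 2)).differentiableAt one_ne_zero
  exact (hd.hasFDerivAt.clm_apply (hasFDerivAt_const (EuclideanSpace.single j 1) x)).pd_eq.trans
    (by simp)

theorem pd_pd_comm (hf : ContDiffAt ℝ 2 f x) : pd i (pd j f) x = pd j (pd i f) x := by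
  rw [pd_pd_eq_fderiv_fderiv hf, pd_pd_eq_fderiv_fderiv hf]
  exact (hf.isSymmSndFDerivAt (by simp)).eq _ _

theorem pd_pd_pd_comm (hf : ContDiffAt ℝ 3 f x) :
    pd i (pd j (pd k f)) x = pd k (pd j (pd i f)) x := by
  have hcomm : pd i (pd k f) =ᶠ[𝓝 x] pd k (pd i f) :=
    (hf.eventually (by simp)).mono fun _ hy => pd_pd_comm (hy.of_le (by norm_num))
  calc pd i (pd j (pd k f)) x
      = pd j (pd i (pd k f)) x := pd_pd_comm (contDiffAt_pd hf (by norm_num) k)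
    _ = pd j (pd k (pd i f)) x := pd_congr hcomm
    _ = pd k (pd j (pd i f)) x := pd_pd_comm (contDiffAt_pd hf (by norm_num) i)

theorem pd_pd_add (hf : ContDiffAt ℝ 2 f x) (hg : ContDiffAt ℝ 2 g x) :
    pd i (pd j (fun y => f y + g y)) x = pd i (pd j f) x + pd i (pd j g) x := by
  have h : pd j (fun y => f y + g y) =ᶠ[𝓝 x] fun y => pd j f y + pd j g y :=
    (hf.eventually_differentiableAt.and hg.eventually_differentiableAt).mono
      fun _ hy => pd_add hy.1 hy.2
  rw [pd_congr h, pd_add (hf.differentiableAt_pd j) (hg.differentiableAt_pd j)]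

theorem pd_pd_sub (hf : ContDiffAt ℝ 2 f x) (hg : ContDiffAt ℝ 2 g x) :
    pd i (pd j (fun y => f y - g y)) x = pd i (pd j f) x - pd i (pd j g) x := by
  have h : pd j (fun y => f y - g y) =ᶠ[𝓝 x] fun y => pd j f y - pd j g y :=
    (hf.eventually_differentiableAt.and hg.eventually_differentiableAt).mono
      fun _ hy => pd_sub hy.1 hy.2
  rw [pd_congr h, pd_sub (hf.differentiableAt_pd j) (hg.differentiableAt_pd j)]

theorem pd_pd_const_mul (hf : ContDiffAt ℝ 2 f x) (a : ℝ) :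
    pd i (pd j (fun y => a * f y)) x = a * pd i (pd j f) x := by
  have h : pd j (fun y => a * f y) =ᶠ[𝓝 x] fun y => a * pd j f y :=
    hf.eventually_differentiableAt.mono fun _ hy => pd_const_mul hy a
  rw [pd_congr h, pd_const_mul (hf.differentiableAt_pd j)]

theorem pd_pd_coord_mul (hf : ContDiffAt ℝ 2 f x) (k : Fin m) :
    pd i (pd j (fun y => y k * f y)) x
      = (if j = k then 1 else 0) * pd i f x + (if i = k then 1 else 0) * pd j f x
        + x k * pd i (pd j f) x := by
  have h : pd j (fun y => y k * f y) =ᶠ[𝓝 x]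
      fun y => (if j = k then 1 else 0) * f y + y k * pd j f y :=
    hf.eventually_differentiableAt.mono fun _ hy => pd_coord_mul hy k
  have hf' : DifferentiableAt ℝ f x := hf.differentiableAt (by norm_num)
  have hpf := hf.differentiableAt_pd j
  rw [pd_congr h, pd_add (hf'.const_mul _)
    ((PiLp.hasFDerivAt_apply (𝕜 := ℝ) 2 x k).differentiableAt.fun_mul hpf),
    pd_const_mul hf', pd_coord_mul hpf]
  ring

theorem hessMatrix_transpose (hf : ContDiffAt ℝ 2 f x) : (hessMatrix f x)ᵀ = hessMatrix f x :=
  Matrix.ext fun _ _ => pd_pd_comm hf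

end PartialDerivatives

def secondOrderOp {m : ℕ} (A : Matrix (Fin m) (Fin m) ℝ) (f : EuclideanSpace ℝ (Fin m) → ℝ)
    (x : EuclideanSpace ℝ (Fin m)) : ℝ :=
  ∑ i, ∑ j, A i j * pd i (pd j f) x

section SecondOrderOp

variable {m : ℕ} (A : Matrix (Fin m) (Fin m) ℝ) {f g : EuclideanSpace ℝ (Fin m) → ℝ}
  {x : EuclideanSpace ℝ (Fin m)}

theorem secondOrderOp_add (hf : ContDiffAt ℝ 2 f x) (hg : ContDiffAt ℝ 2 g x) :
    secondOrderOp A (fun y => f y + g y) x = secondOrderOp A f x + secondOrderOp A g x := by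
  simp only [secondOrderOp, pd_pd_add hf hg, mul_add, Finset.sum_add_distrib]

theorem secondOrderOp_sub (hf : ContDiffAt ℝ 2 f x) (hg : ContDiffAt ℝ 2 g x) :
    secondOrderOp A (fun y => f y - g y) x = secondOrderOp A f x - secondOrderOp A g x := by
  simp only [secondOrderOp, pd_pd_sub hf hg, mul_sub, Finset.sum_sub_distrib]

theorem secondOrderOp_const_mul (hf : ContDiffAt ℝ 2 f x) (a : ℝ) :
    secondOrderOp A (fun y => a * f y) x = a * secondOrderOp A f x := by
  simp only [secondOrderOp, pd_pd_const_mul hf, Finset.mul_sum, mul_left_comm]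

theorem secondOrderOp_coord_mul (hf : ContDiffAt ℝ 2 f x) (k : Fin m) :
    secondOrderOp A (fun y => y k * f y) x
      = ∑ j, A k j * pd j f x + ∑ i, A i k * pd i f x + x k * secondOrderOp A f x := by
  simp [secondOrderOp, pd_pd_coord_mul hf, mul_add, Finset.sum_add_distrib, Finset.mul_sum,
    ite_mul, mul_left_comm (x k), add_comm]

theorem secondOrderOp_eq_trace (u : EuclideanSpace ℝ (Fin m) → ℝ) :
    secondOrderOp A u x = (A * (hessMatrix u x)ᵀ).trace := by
  simp [secondOrderOp, Matrix.trace, Matrix.mul_apply, hessMatrix]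

end SecondOrderOp

namespace Matrix

variable {𝕜 ι α : Type*} [Fintype ι] [DecidableEq ι]

theorem det_updateRow_eq_sum_adjugate [CommRing α] (M : Matrix ι ι α) (i : ι) (b : ι → α) :
    (M.updateRow i b).det = ∑ j, M.adjugate j i * b j := by
  rw [← det_transpose, ← updateCol_transpose, ← cramer_apply, cramer_eq_adjugate_mulVec,
    ← adjugate_transpose]
  rfl

theorem eq_adjugate_of_mul_eq_det_smul [CommRing α] {M U : Matrix ι ι α} (hM : IsUnit M.det)
    (hU : U * M = M.det • 1) : U = M.adjugate :=
  have := M.invertibleOfIsUnitDet hM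
  (mul_left_inj_of_invertible M).1 (hU.trans (adjugate_mul M).symm)

variable [NontriviallyNormedField 𝕜]

variable (𝕜 ι) in
def detRowContinuousMultilinear : ContinuousMultilinearMap 𝕜 (fun _ : ι => ι → 𝕜) 𝕜 :=
  { (detRowAlternating : (ι → 𝕜) [⋀^ι]→ₗ[𝕜] 𝕜).toMultilinearMap with
    cont := continuous_id.matrix_det }

theorem linearDeriv_detRowContinuousMultilinear (M B : ι → ι → 𝕜) :
    (detRowContinuousMultilinear 𝕜 ι).linearDeriv M B = ((of M).adjugate * of B).trace := by
  rw [ContinuousMultilinearMap.linearDeriv_apply]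
  simp only [trace, diag, mul_apply, of_apply]
  rw [Finset.sum_comm]
  exact Finset.sum_congr rfl fun i _ => det_updateRow_eq_sum_adjugate (of M) i (B i)

/-- Jacobi's formula `d (det A) = tr (adj A · dA)`, for a matrix function whose determinant is
locally constant. -/
theorem trace_adjugate_mul_eq_zero_of_eventually_det_eq {E : Type*} [NormedAddCommGroup E]
    [NormedSpace 𝕜 E] {A : E → ι → ι → 𝕜} {A' : E →L[𝕜] ι → ι → 𝕜} {x : E} {c : 𝕜}
    (hA : HasFDerivAt A A' x) (hdet : ∀ᶠ y in 𝓝 x, (of (A y)).det = c) (v : E) :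
    ((of (A x)).adjugate * of (A' v)).trace = 0 := by
  have hD : HasFDerivAt (fun y => (of (A y)).det)
      ((detRowContinuousMultilinear 𝕜 ι).linearDeriv (A x) ∘L A') x :=
    ((detRowContinuousMultilinear 𝕜 ι).hasFDerivAt (A x)).comp x hA
  have hconst : (fun y => (of (A y)).det) =ᶠ[𝓝 x] fun _ => c := hdet
  rw [← linearDeriv_detRowContinuousMultilinear, ← ContinuousLinearMap.comp_apply, ← hD.fderiv,
    hconst.fderiv_eq, fderiv_const_apply]
  rfl

end Matrix

section Hessian

variable {m : ℕ} {u : EuclideanSpace ℝ (Fin m) → ℝ} {x : EuclideanSpace ℝ (Fin m)} {c : ℝ}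

theorem secondOrderOp_adjugate_hessMatrix_pd (hu : ContDiffAt ℝ 3 u x)
    (hdet : ∀ᶠ y in 𝓝 x, (hessMatrix u y).det = c) (k : Fin m) :
    secondOrderOp (hessMatrix u x).adjugate (pd k u) x = 0 := by
  have hA : HasFDerivAt (fun y i j => pd i (pd j u) y)
      (ContinuousLinearMap.pi fun i => ContinuousLinearMap.pi fun j =>
        fderiv ℝ (pd i (pd j u)) x) x :=
    hasFDerivAt_pi.2 fun i => hasFDerivAt_pi.2 fun j =>
      ((contDiffAt_pd hu (l := 2) le_rfl j).differentiableAt_pd i).hasFDerivAt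
  rw [← Matrix.trace_adjugate_mul_eq_zero_of_eventually_det_eq hA hdet
    (EuclideanSpace.single k 1)]
  simp only [secondOrderOp, Matrix.trace, Matrix.diag, Matrix.mul_apply]
  refine Finset.sum_congr rfl fun i _ => Finset.sum_congr rfl fun j _ => ?_
  rw [pd_pd_pd_comm hu]
  rfl

theorem secondOrderOp_adjugate_hessMatrix_auxiliary_eq_zero (hu : ContDiffAt ℝ 3 u x)
    (hdet : ∀ᶠ y in 𝓝 x, (hessMatrix u y).det = c) (k : Fin m) (K : ℝ) :
    secondOrderOp (hessMatrix u x).adjugate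
      (fun y => pd k u y + K * (u y - (m / 2 : ℝ) * y k * pd k u y)) x = 0 := by
  set H := hessMatrix u x
  have hu2 : ContDiffAt ℝ 2 u x := hu.of_le (by norm_num)
  have hg : ContDiffAt ℝ 2 (pd k u) x := contDiffAt_pd hu le_rfl k
  have hxg : ContDiffAt ℝ 2 (fun y => y k * pd k u y) x := by fun_prop
  have hrow : ∑ j, H.adjugate k j * pd j (pd k u) x = H.det :=
    calc ∑ j, H.adjugate k j * pd j (pd k u) x = (H.adjugate * H) k k := Matrix.mul_apply.symm
      _ = H.det := by simp [Matrix.adjugate_mul]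
  have hcol : ∑ i, H.adjugate i k * pd i (pd k u) x = H.det :=
    calc ∑ i, H.adjugate i k * pd i (pd k u) x = (H * H.adjugate) k k := by
          simp only [Matrix.mul_apply, H, hessMatrix, Matrix.of_apply, pd_pd_comm hu2, mul_comm]
      _ = H.det := by simp [Matrix.mul_adjugate]
  have htrace : secondOrderOp H.adjugate u x = H.det * m := by
    rw [secondOrderOp_eq_trace, hessMatrix_transpose hu2, Matrix.adjugate_mul, Matrix.trace_smul,
      Matrix.trace_one, Fintype.card_fin, smul_eq_mul]
  have hw : (fun y => pd k u y + K * (u y - (m / 2 : ℝ) * y k * pd k u y))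
      = fun y => pd k u y + K * (u y - (m / 2 : ℝ) * (y k * pd k u y)) := by
    funext y; ring
  rw [hw, secondOrderOp_add _ hg (by fun_prop), secondOrderOp_const_mul _ (by fun_prop),
    secondOrderOp_sub _ hu2 (by fun_prop), secondOrderOp_const_mul _ hxg,
    secondOrderOp_coord_mul _ hg, secondOrderOp_adjugate_hessMatrix_pd hu hdet, htrace, hrow, hcol]
  ring

end Hessian

theorem statement14_general {n : ℕ} (O : Set (EuclideanSpace ℝ (Fin (n + 1))))
    (hO : IsOpen O)
    (u : EuclideanSpace ℝ (Fin (n + 1)) → ℝ)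
    (hu : ContDiffOn ℝ 3 u O)
    (c : ℝ) (hc : 0 < c)
    (hdet : ∀ x ∈ O, (hessMatrix u x).det = c)
    (U : EuclideanSpace ℝ (Fin (n + 1)) → Matrix (Fin (n + 1)) (Fin (n + 1)) ℝ)
    (hU : ∀ x ∈ O, U x * hessMatrix u x =
      (hessMatrix u x).det • (1 : Matrix (Fin (n + 1)) (Fin (n + 1)) ℝ))
    (K : ℝ) (w : EuclideanSpace ℝ (Fin (n + 1)) → ℝ)
    (hw : ∀ x, w x = pd 0 u x + K * (u x - ((n + 1 : ℝ) / 2) * x 0 * pd 0 u x)) :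
    ∀ x ∈ O, ∑ i, ∑ j, U x i j * pd i (pd j w) x = 0 := by
  intro x hx
  have hOx : O ∈ 𝓝 x := hO.mem_nhds hx
  have hUx : U x = (hessMatrix u x).adjugate :=
    Matrix.eq_adjugate_of_mul_eq_det_smul (by simp [hdet x hx, hc.ne']) (hU x hx)
  have hw' : w = fun y => pd 0 u y + K * (u y - ((n + 1 : ℕ) / 2 : ℝ) * y 0 * pd 0 u y) :=
    funext fun y => by rw [hw]; push_cast; rfl
  rw [hUx, hw']
  exact secondOrderOp_adjugate_hessMatrix_auxiliary_eq_zero ((hu x hx).contDiffAt hOx)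
    (Filter.eventually_of_mem hOx hdet) 0 K

/-- if `u` is a `C³` convex function with positive definite Hessian
solving `det D²u = c` for a positive constant `c` on an open set, `(Uᵢⱼ)` is the
cofactor matrix of `D²u` (so `U · D²u = det(D²u) · Id`), and
`w = ∂₁u + K(u − (n/2)x₁∂₁u)`, then `Σᵢⱼ Uᵢⱼ ∂ᵢ∂ⱼ w = 0`.  (The space is `ℝ^{n+1}`,
`e₁` is the coordinate direction indexed by `0`.) -/
theorem statement14 {n : ℕ} (O : Set (EuclideanSpace ℝ (Fin (n + 1))))
    (hO : IsOpen O) (hOc : Convex ℝ O)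
    (u : EuclideanSpace ℝ (Fin (n + 1)) → ℝ)
    (hu : ContDiffOn ℝ 3 u O) (hconv : ConvexOn ℝ O u)
    (hpos : ∀ x ∈ O, (hessMatrix u x).PosDef)
    (c : ℝ) (hc : 0 < c)
    (hdet : ∀ x ∈ O, (hessMatrix u x).det = c)
    (U : EuclideanSpace ℝ (Fin (n + 1)) → Matrix (Fin (n + 1)) (Fin (n + 1)) ℝ)
    (hU : ∀ x ∈ O, U x * hessMatrix u x =
      (hessMatrix u x).det • (1 : Matrix (Fin (n + 1)) (Fin (n + 1)) ℝ))
    (K : ℝ) (w : EuclideanSpace ℝ (Fin (n + 1)) → ℝ)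
    (hw : ∀ x, w x = pd 0 u x + K * (u x - ((n + 1 : ℝ) / 2) * x 0 * pd 0 u x)) :
    ∀ x ∈ O, ∑ i, ∑ j, U x i j * pd i (pd j w) x = 0 :=
  statement14_general O hO u hu c hc hdet U hU K w hw
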